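/- Conjunctive Bounding Lemma, part (i): Let U_1 and U_2 be two TA templates with conjunctive guards, let Φ(1_2) be an IMTL formula over the first instance of U_2, and let Q ∈ {E, E_inf, E_fin}. Set c_2 = 2 if Q = E_inf, c_2 = 1 if Q = E_fin, and c_2 = 2|U_2|+1 if Q = E. Then for every n ≥ c_2: if (U_1,U_2)^{(1,n)} ⊨ Q Φ(1_2) then (U_1,U_2)^{(1,c_2)} ⊨ Q Φ(1_2). -/

import Mathlib

open scoped ENNReal NNReal

namespace PNTA

/-! ### Basic ingredients: comparisons and clock constraints -/

/-- Comparison operators `<, ≤, >, ≥, =`. -/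
inductive Cmp : Type
  | lt | le | gt | ge | eq

/-- Evaluation of a comparison operator on nonnegative reals. -/
def Cmp.eval : Cmp → NNReal → NNReal → Prop
  | .lt, a, b => a < b
  | .le, a, b => a ≤ b
  | .gt, a, b => b < a
  | .ge, a, b => b ≤ a
  | .eq, a, b => a = b

/-- Clock constraints `TC(C)`: Boolean combinations of comparisons of clocks with
clocks or with nonnegative rational constants. -/
inductive ClockConstraint (C : Type) : Type
  | tt
  | neg (g : ClockConstraint C)
  | disj (g₁ g₂ : ClockConstraint C)
  | cmpClock (op : Cmp) (c₁ c₂ : C)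
  | cmpConst (op : Cmp) (c : C) (q : ℚ≥0)

/-- Satisfaction of a clock constraint by a clock valuation. -/
def ClockConstraint.sat {C : Type} (u : C → NNReal) : ClockConstraint C → Prop
  | .tt => True
  | .neg g => ¬ g.sat u
  | .disj g₁ g₂ => g₁.sat u ∨ g₂.sat u
  | .cmpClock op c₁ c₂ => op.eval (u c₁) (u c₂)
  | .cmpConst op c q => op.eval (u c) (q : NNReal)

/-! ### Parameterized networks of timed automata with conjunctive guards -/

/-- A parameterized network of `k` timed automaton templates
`U_l = ⟨S_l, ŝ_l, C_l, Γ_l, τ_l, I_l⟩` with **conjunctive guards**.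
A conjunctive guard assigns to every template `h` a set of states of `U_h`
(the disjunction `ŝ_h ∨ s_h¹ ∨ ⋯`), which must contain the initial state `ŝ_h`;
it is satisfied by a global state when every *other* instance of every template `h`
is in a state belonging to the corresponding set. -/
structure ConjPNTA (k : ℕ) : Type 1 where
  /-- states of each template -/
  State : Fin k → Type
  stateFintype : ∀ l, Fintype (State l)
  /-- initial state of each template -/
  init : ∀ l, State l
  /-- clock variables of each template -/
  Clock : Fin k → Type
  clockFintype : ∀ l, Fintype (Clock l)
  /-- transitions `s —(g,r,γ)→ t`: source, clock constraint, reset set, conjunctive guard, target -/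
  trans : ∀ l, Set (State l × ClockConstraint (Clock l) × Set (Clock l) ×
      ((h : Fin k) → Set (State h)) × State l)
  trans_finite : ∀ l, (trans l).Finite
  /-- guards are conjunctive: every disjunct contains the initial state -/
  guards_conj : ∀ l tr, tr ∈ trans l → ∀ h, init h ∈ tr.2.2.2.1 h
  /-- state invariants -/
  inv : ∀ l, State l → ClockConstraint (Clock l)
  inv_init : ∀ l, inv l (init l) = ClockConstraint.tt

variable {k : ℕ}

/-- `|U_l|`: the number of states of template `l`. -/
def ConjPNTA.size (A : ConjPNTA k) (l : Fin k) : ℕ :=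
  @Fintype.card (A.State l) (A.stateFintype l)

lemma ConjPNTA.size_pos (A : ConjPNTA k) (l : Fin k) : 0 < A.size l :=
  @Fintype.card_pos _ (A.stateFintype l) ⟨A.init l⟩

/-- A configuration of the PNTA `(U_1,…,U_k)^{(n_1,…,n_k)}`: each instance `U_l^i`
(`l < k`, `i < n_l`) has a current state and a clock valuation satisfying the
invariant of that state. -/
structure Config (A : ConjPNTA k) (n : Fin k → ℕ) : Type where
  st : ∀ l, Fin (n l) → A.State l
  cl : ∀ l, Fin (n l) → A.Clock l → NNReal
  inv_sat : ∀ l i, (A.inv l (st l i)).sat (cl l i)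

/-- The initial configuration: every instance in its initial state, all clocks `0`. -/
def initConfig (A : ConjPNTA k) (n : Fin k → ℕ) : Config A n where
  st := fun l _ => A.init l
  cl := fun _ _ _ => 0
  inv_sat := fun l _ => by rw [A.inv_init l]; exact trivial

/-- The global state of configuration `c` satisfies the conjunctive guard `γ`
from the point of view of instance `(l, i)`: every other instance is in one of
the allowed states. -/
def guardSat {A : ConjPNTA k} {n : Fin k → ℕ} (c : Config A n) (l : Fin k) (i : Fin (n l))
    (γ : (h : Fin k) → Set (A.State h)) : Prop :=
  ∀ p : Σ h, Fin (n h), p ≠ ⟨l, i⟩ → c.st p.1 p.2 ∈ γ p.1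

/-- Delay transition `c →d c'`: all clocks of all instances advance by `d`,
states are unchanged, and all invariants hold throughout the delay. -/
def DelayStep {A : ConjPNTA k} {n : Fin k → ℕ} (d : NNReal) (c c' : Config A n) : Prop :=
  c'.st = c.st ∧
  (∀ l i x, c'.cl l i x = c.cl l i x + d) ∧
  (∀ l i (d' : NNReal), d' ≤ d → (A.inv l (c.st l i)).sat fun x => c.cl l i x + d')

/-- Synchronization transition `c →γ c'`: exactly one instance `U_l^i` fires a
transition `s —(g,r,γ)→ t` of `τ_l`; its current state is `s`, its clocks satisfy `g`,
the global state satisfies the conjunctive guard `γ`, its clocks in `r` are reset to 0,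
and all other instances are unchanged. -/
def SyncStep {A : ConjPNTA k} {n : Fin k → ℕ} (c c' : Config A n) : Prop :=
  ∃ (l : Fin k) (i : Fin (n l)), ∃ tr ∈ A.trans l,
    tr.1 = c.st l i ∧
    tr.2.1.sat (c.cl l i) ∧
    guardSat c l i tr.2.2.2.1 ∧
    c'.st l i = tr.2.2.2.2 ∧
    (∀ x, (x ∈ tr.2.2.1 → c'.cl l i x = 0) ∧ (x ∉ tr.2.2.1 → c'.cl l i x = c.cl l i x)) ∧
    (∀ p : Σ h, Fin (n h), p ≠ ⟨l, i⟩ → c'.st p.1 p.2 = c.st p.1 p.2 ∧ c'.cl p.1 p.2 = c.cl p.1 p.2)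

/-- A step of a timed computation: a delay transition with positive delay
(time advances accordingly) or a synchronization transition (time unchanged). -/
def Step {A : ConjPNTA k} {n : Fin k → ℕ} (c c' : Config A n) (t t' : NNReal) : Prop :=
  (∃ d : NNReal, 0 < d ∧ DelayStep d c c' ∧ t' = t + d) ∨ (SyncStep c c' ∧ t' = t)

/-- A timed computation starting at configuration `c₀` at time `0`: a finite or
infinite sequence of configuration/time pairs (represented as a partial function
on positions with downward closed domain) whose consecutive elements are related
by delay or synchronization transitions. -/
structure TimedComp (A : ConjPNTA k) (n : Fin k → ℕ) (c₀ : Config A n) : Type where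
  seq : ℕ → Option (Config A n × NNReal)
  zero_def : seq 0 = some (c₀, 0)
  downward : ∀ v, (seq (v + 1)).isSome → (seq v).isSome
  step : ∀ v c t c' t', seq v = some (c, t) → seq (v + 1) = some (c', t') → Step c c' t t'

namespace TimedComp

variable {A : ConjPNTA k} {n : Fin k → ℕ} {c₀ : Config A n}

/-- An infinite timed computation. -/
def Infinite (x : TimedComp A n c₀) : Prop := ∀ v, (x.seq v).isSome

/-- A (not necessarily maximal) finite timed computation. -/
def Finite (x : TimedComp A n c₀) : Prop := ∃ v, x.seq v = none

/-- A deadlocked timed computation: maximal finite, i.e. all transitions are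
disabled at its final configuration. -/
def Deadlocked (x : TimedComp A n c₀) : Prop :=
  ∃ v c t, x.seq v = some (c, t) ∧ x.seq (v + 1) = none ∧
    ∀ c' : Config A n, ¬ ((∃ d : NNReal, 0 < d ∧ DelayStep d c c') ∨ SyncStep c c')

/-- The time stamp at position `v` (junk value `0` outside the domain). -/
def timeAt (x : TimedComp A n c₀) (v : ℕ) : NNReal := ((x.seq v).map Prod.snd).getD 0

end TimedComp

/-! ### s-paths (continuous-time signals induced by timed computations) -/

/-- An s-path: a continuous-time signal of configurations, together with its
(possibly infinite) length. -/
structure SPath (A : ConjPNTA k) (n : Fin k → ℕ) : Type where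
  len : ℝ≥0∞
  toFun : NNReal → Config A n

/-- The suffix `ρ⌊t` of an s-path. -/
noncomputable def SPath.suffix {A : ConjPNTA k} {n : Fin k → ℕ} (ρ : SPath A n) (t : NNReal) : SPath A n where
  len := ρ.len - (t : ℝ≥0∞)
  toFun := fun s => ρ.toFun (t + s)

/-- The timed computation `x` induces the s-path `ρ`: for every step of `x` from
`(c_v,t_v)` to `(c_{v+1},t_{v+1})` and every time `s ∈ [t_v, t_{v+1})`, `ρ(s)` has
the states of `c_v` with clocks advanced by `s - t_v`; the length of `ρ` is the
supremum of the time stamps (for an infinite computation), resp. the final time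
stamp (for a finite one, at which the final configuration persists). -/
def Induces {A : ConjPNTA k} {n : Fin k → ℕ} {c₀ : Config A n}
    (x : TimedComp A n c₀) (ρ : SPath A n) : Prop :=
  (∀ v c t c' t', x.seq v = some (c, t) → x.seq (v + 1) = some (c', t') →
    ∀ s : NNReal, t ≤ s → s < t' →
      (ρ.toFun s).st = c.st ∧ ∀ l i cx, (ρ.toFun s).cl l i cx = c.cl l i cx + (s - t)) ∧
  (x.Infinite → ρ.len = ⨆ v, (x.timeAt v : ℝ≥0∞)) ∧
  (∀ v c t, x.seq v = some (c, t) → x.seq (v + 1) = none →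
    ρ.len = (t : ℝ≥0∞) ∧ (ρ.toFun t).st = c.st ∧ ∀ l i cx, (ρ.toFun t).cl l i cx = c.cl l i cx)

/-- `tcomp(ρ)`: the set of timed computations (from `c₀`) inducing the s-path `ρ`. -/
def tcomp {A : ConjPNTA k} {n : Fin k → ℕ} (c₀ : Config A n) (ρ : SPath A n) :
    Set (TimedComp A n c₀) :=
  {x | Induces x ρ}

/-- `|ρ| = ω` : `ρ` is (induced by) an infinite timed computation from `c₀`. -/
def SPath.IsInfiniteFrom {A : ConjPNTA k} {n : Fin k → ℕ} (c₀ : Config A n) (ρ : SPath A n) : Prop :=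
  ∃ x : TimedComp A n c₀, Induces x ρ ∧ x.Infinite

/-- `|ρ| < ω` : `ρ` is induced by a finite timed computation from `c₀`. -/
def SPath.IsFiniteFrom {A : ConjPNTA k} {n : Fin k → ℕ} (c₀ : Config A n) (ρ : SPath A n) : Prop :=
  ∃ x : TimedComp A n c₀, Induces x ρ ∧ x.Finite

/-- `deadlock(ρ)` : `ρ` is induced by a deadlocked timed computation from `c₀`. -/
def SPath.IsDeadlockedFrom {A : ConjPNTA k} {n : Fin k → ℕ} (c₀ : Config A n) (ρ : SPath A n) : Prop :=
  ∃ x : TimedComp A n c₀, Induces x ρ ∧ x.Deadlocked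

/-! ### IMTL formulae and their continuous-time semantics -/

/-- IMTL path formulae over atomic propositions `α`: built from `⊤` and atoms by
Boolean operators (`∧`, `¬`) and time-constrained until `Φ U_{∼q} Ψ` with
`∼ ∈ {<,≤,>,≥,=}` and `q ∈ ℚ≥0`. -/
inductive IMTL (α : Type) : Type
  | tt
  | atom (a : α)
  | and (φ ψ : IMTL α)
  | not (φ : IMTL α)
  | untl (op : Cmp) (q : ℚ≥0) (φ ψ : IMTL α)

/-- Satisfaction of an IMTL path formula on an s-path, given a valuation of the
atomic propositions on configurations. -/
def satIMTL {A : ConjPNTA k} {n : Fin k → ℕ} {α : Type} (val : α → Config A n → Prop) :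
    IMTL α → SPath A n → Prop
  | .tt, _ => True
  | .atom a, ρ => val a (ρ.toFun 0)
  | .and φ ψ, ρ => satIMTL val φ ρ ∧ satIMTL val ψ ρ
  | .not φ, ρ => ¬ satIMTL val φ ρ
  | .untl op q φ ψ, ρ => ∃ t' : NNReal, (t' : ℝ≥0∞) ≤ ρ.len ∧ op.eval t' (q : NNReal) ∧
      satIMTL val ψ (ρ.suffix t') ∧ ∀ t : NNReal, t < t' → satIMTL val φ (ρ.suffix t)

/-- The six path quantifiers `A, A_inf, A_fin, E, E_inf, E_fin`. -/
inductive PathQ : Type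
  | A | Ainf | Afin | E | Einf | Efin

/-- `(U_1,…,U_k)^{(n_1,…,n_k)} ⊨ Q Φ` for a path quantifier `Q`: quantification over
the s-paths from the initial configuration that are infinite or deadlocked (`A`, `E`),
infinite (`A_inf`, `E_inf`), resp. finite (`A_fin`, `E_fin`). -/
def SatQ (A : ConjPNTA k) (n : Fin k → ℕ) {α : Type} (val : α → Config A n → Prop)
    (Q : PathQ) (Φ : IMTL α) : Prop :=
  match Q with
  | .A => ∀ ρ : SPath A n,
      (ρ.IsInfiniteFrom (initConfig A n) ∨ ρ.IsDeadlockedFrom (initConfig A n)) → satIMTL val Φ ρ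
  | .Ainf => ∀ ρ : SPath A n, ρ.IsInfiniteFrom (initConfig A n) → satIMTL val Φ ρ
  | .Afin => ∀ ρ : SPath A n, ρ.IsFiniteFrom (initConfig A n) → satIMTL val Φ ρ
  | .E => ∃ ρ : SPath A n,
      (ρ.IsInfiniteFrom (initConfig A n) ∨ ρ.IsDeadlockedFrom (initConfig A n)) ∧ satIMTL val Φ ρ
  | .Einf => ∃ ρ : SPath A n, ρ.IsInfiniteFrom (initConfig A n) ∧ satIMTL val Φ ρ
  | .Efin => ∃ ρ : SPath A n, ρ.IsFiniteFrom (initConfig A n) ∧ satIMTL val Φ ρ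

/-- Atomic propositions of the indexed formula `Φ(i_{l₁},…,i_{l_h})`: a quantified
slot `j < h` together with a state (= atomic proposition) of template `l_j`. -/
def Atoms (A : ConjPNTA k) {h : ℕ} (l : Fin h → Fin k) : Type :=
  Σ j : Fin h, A.State (l j)

/-- The valuation of the atoms, given an assignment `inst` of concrete instances to
the quantified slots: `p(l_j, i_{l_j})` holds iff instance `i_{l_j}` of template `l_j`
is in state `p`. -/
def atomVal (A : ConjPNTA k) (n : Fin k → ℕ) {h : ℕ} (l : Fin h → Fin k)
    (inst : ∀ j : Fin h, Fin (n (l j))) : Atoms A l → Config A n → Prop :=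
  fun a c => c.st (l a.1) (inst a.1) = a.2

/-- `(U_1,…,U_k)^{(n_1,…,n_k)} ⊨ ⋀_{i_{l₁},…,i_{l_h}} Q Φ(i_{l₁},…,i_{l_h})`. -/
def SatFormula (A : ConjPNTA k) (n : Fin k → ℕ) {h : ℕ} (l : Fin h → Fin k)
    (Q : PathQ) (Φ : IMTL (Atoms A l)) : Prop :=
  ∀ inst : ∀ j : Fin h, Fin (n (l j)), SatQ A n (atomVal A n l inst) Q Φ

/-! ### Helpers for networks of two templates -/

/-- The size function of the system `(U₁,U₂)^{(a,b)}`. -/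
def two (a b : ℕ) : Fin 2 → ℕ := fun m => if m.val = 0 then a else b

/-- The valuation interpreting the atoms of a formula `Φ(1_t)` over the *first*
instance of template `t`. -/
def valFirst (A : ConjPNTA 2) (n : Fin 2 → ℕ) (t : Fin 2) (hp : 0 < n t) :
    A.State t → Config A n → Prop :=
  fun p c => c.st t ⟨0, hp⟩ = p


/-! ### Cutoffs for two-template systems -/

/-- Cutoff for the template tracked by the formula `Φ(1₂)` (part (i)):
`2` for `E_inf`, `1` for `E_fin`, `2|U₂| + 1` for `E`. -/
def cutoffTracked (A : ConjPNTA 2) : PathQ → ℕ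
  | PathQ.Einf => 2
  | PathQ.Efin => 1
  | PathQ.E => 2 * A.size 1 + 1
  | _ => 1

/-- Cutoff for the untracked template (part (ii)):
`1` for `E_inf`, `1` for `E_fin`, `2|U₂|` for `E`. -/
def cutoffOther (A : ConjPNTA 2) : PathQ → ℕ
  | PathQ.Einf => 1
  | PathQ.Efin => 1
  | PathQ.E => 2 * A.size 1
  | _ => 1

lemma cutoffTracked_pos (A : ConjPNTA 2) (Q : PathQ) : 0 < cutoffTracked A Q := by
  have := A.size_pos 1
  cases Q <;> simp only [cutoffTracked] <;> omega

lemma cutoffOther_pos (A : ConjPNTA 2) (Q : PathQ) : 0 < cutoffOther A Q := by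
  have := A.size_pos 1
  cases Q <;> simp only [cutoffOther] <;> omega

/-! ### Stuttering, reindexings and local computations -/

/-- `y` is a *stuttering* of `x`: it is obtained from `x` by inserting, between
consecutive elements, finitely many intermediate observations of the same states
with clocks advanced by small delays `δ`, without altering the original elements.
The map `m` sends a position of `y` to the position of `x` it refines. -/
def Stuttering {A : ConjPNTA k} {n : Fin k → ℕ} {c₀ : Config A n}
    (y x : TimedComp A n c₀) : Prop :=
  ∃ m : ℕ → ℕ, Monotone m ∧ m 0 = 0 ∧
    (∀ w, (y.seq w).isSome → (x.seq (m w)).isSome) ∧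
    (∀ w, y.seq w = none → ∃ v, x.seq v = none) ∧
    (∀ v, Set.Finite {w | (y.seq w).isSome ∧ m w = v}) ∧
    (∀ v, (x.seq v).isSome → ∃ w, m w = v ∧ y.seq w = x.seq v) ∧
    (∀ w cy ty cx tx, y.seq w = some (cy, ty) → x.seq (m w) = some (cx, tx) →
      tx ≤ ty ∧ cy.st = cx.st ∧ (∀ l i cxk, cy.cl l i cxk = cx.cl l i cxk + (ty - tx)) ∧
      ∀ cx' tx', x.seq (m w + 1) = some (cx', tx') → ty ≤ tx')

/-- A reindexing of positions between a timed computation `x` and a timed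
computation `y` obtained from `x` by collapsing some steps. -/
def Reindex {A : ConjPNTA k} {n n' : Fin k → ℕ} {c₀ : Config A n} {c₀' : Config A n'}
    (x : TimedComp A n c₀) (y : TimedComp A n' c₀') (m : ℕ → ℕ) : Prop :=
  Monotone m ∧ m 0 = 0 ∧
    (∀ v, (x.seq v).isSome → (y.seq (m v)).isSome) ∧
    (∀ w, (y.seq w).isSome → ∃ v, (x.seq v).isSome ∧ m v = w)

/-- The local timed computation of instance `(l, iy)` of `y` coincides (through the
reindexing `m`) with the local timed computation of instance `(l, ix)` of `x`:
same times, same states, same clock values. -/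
def LocalMatch {A : ConjPNTA k} {n n' : Fin k → ℕ} {c₀ : Config A n} {c₀' : Config A n'}
    (x : TimedComp A n c₀) (y : TimedComp A n' c₀') (m : ℕ → ℕ)
    (l : Fin k) (ix : Fin (n l)) (iy : Fin (n' l)) : Prop :=
  ∀ v c t c' t', x.seq v = some (c, t) → y.seq (m v) = some (c', t') →
    t' = t ∧ c'.st l iy = c.st l ix ∧ c'.cl l iy = c.cl l ix

/-- Instance `(l, i)` of `y` follows the idle local computation: it stutters in the
initial state `ŝ_l` with all its clocks equal to the elapsed time. -/
def IdleLocal {A : ConjPNTA k} {n : Fin k → ℕ} {c₀ : Config A n}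
    (y : TimedComp A n c₀) (l : Fin k) (i : Fin (n l)) : Prop :=
  ∀ v c t, y.seq v = some (c, t) → c.st l i = A.init l ∧ ∀ cx, c.cl l i cx = t

/-- The local computation of instance `(l, i)` of `x` is infinite: the instance takes
infinitely many (observable) synchronization steps. -/
def LocalInfinite {A : ConjPNTA k} {n : Fin k → ℕ} {c₀ : Config A n}
    (x : TimedComp A n c₀) (l : Fin k) (i : Fin (n l)) : Prop :=
  ∀ N, ∃ v, N ≤ v ∧ ∃ c t c' t', x.seq v = some (c, t) ∧ x.seq (v + 1) = some (c', t') ∧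
    t' = t ∧ ¬ (c'.st l i = c.st l i ∧ c'.cl l i = c.cl l i)

lemma two_le_two_succ (n : ℕ) (l : Fin 2) : two 1 n l ≤ two 1 (n + 1) l := by
  unfold two; split <;> omega

lemma c2two (A : ConjPNTA 2) {c₂ : ℕ} (hc : c₂ = 2 ∨ c₂ = 2 * A.size 1 + 1) : 1 < c₂ := by
  have := A.size_pos 1
  rcases hc with h | h <;> omega

lemma c2pos (A : ConjPNTA 2) {c₂ : ℕ} (hc : c₂ = 2 ∨ c₂ = 2 * A.size 1 + 1) : 0 < c₂ :=
  Nat.lt_of_lt_of_le Nat.one_pos (Nat.le_of_lt (c2two A hc))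

lemma npos (A : ConjPNTA 2) {c₂ n : ℕ} (hc : c₂ = 2 ∨ c₂ = 2 * A.size 1 + 1) (hn : c₂ ≤ n) :
    0 < n := Nat.lt_of_lt_of_le (c2pos A hc) hn


/-! ### Auxiliary development for the proof -/

section CutoffProof

variable {n c₂ : ℕ}

lemma two_eq_one' {m : ℕ} {l : Fin 2} (hl : l.val = 0) : two 1 m l = 1 := by
  simp [two, hl]

lemma two_eq' {a m : ℕ} {l : Fin 2} (hl : ¬ l.val = 0) : two a m l = m := by
  simp [two, hl]

lemma fin_two_sub {m : ℕ} {l : Fin 2} (hl : l.val = 0) (a b : Fin (two 1 m l)) : a = b := by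
  have h1 := two_eq_one' (m := m) hl
  have ha : a.val < 1 := lt_of_lt_of_eq a.isLt h1
  have hb : b.val < 1 := lt_of_lt_of_eq b.isLt h1
  exact Fin.ext (by omega)

/-- The embedding of the instances of the small system into the big system. -/
def emap (g : Fin c₂ → Fin n) : ∀ l : Fin 2, Fin (two 1 c₂ l) → Fin (two 1 n l) :=
  fun l => if hl : l.val = 0
    then fun _ => (finCongr (two_eq_one' (m := n) hl).symm) ⟨0, Nat.one_pos⟩
    else fun i => (finCongr (two_eq' (a := 1) hl).symm) (g (finCongr (two_eq' (a := 1) hl) i))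

lemma emap_inj (g : Fin c₂ → Fin n) (hg : Function.Injective g) (l : Fin 2) :
    Function.Injective (emap g l) := by
  intro a b h
  unfold emap at h
  split at h
  · exact fin_two_sub ‹_› a b
  · have h2 := (finCongr (two_eq' (a := 1) ‹_›).symm).injective h
    have h3 := hg h2
    exact (finCongr (two_eq' (a := 1) ‹_›)).injective h3

lemma emap_one (g : Fin c₂ → Fin n) (j : Fin (two 1 c₂ 1)) : emap g 1 j = g j := rfl

lemma emap_zero_surj (g : Fin c₂ → Fin n) {l : Fin 2} (hl : l.val = 0)
    (b : Fin (two 1 n l)) : ∃ j, emap g l j = b := by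
  refine ⟨(finCongr (two_eq_one' (m := c₂) hl).symm) ⟨0, Nat.one_pos⟩, ?_⟩
  exact fin_two_sub hl _ _

variable {A : ConjPNTA 2}

lemma Config.ext' {k : ℕ} {A : ConjPNTA k} {m : Fin k → ℕ} {c c' : Config A m}
    (h1 : c.st = c'.st) (h2 : c.cl = c'.cl) : c = c' := by
  cases c; cases c'; cases h1; cases h2; rfl

/-- Projection of a configuration of the big system to the small system. -/
def projCfg (g : Fin c₂ → Fin n) (c : Config A (two 1 n)) : Config A (two 1 c₂) where
  st := fun l i => c.st l (emap g l i)
  cl := fun l i => c.cl l (emap g l i)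
  inv_sat := fun l i => c.inv_sat l (emap g l i)

lemma proj_init (g : Fin c₂ → Fin n) :
    projCfg (A := A) g (initConfig A (two 1 n)) = initConfig A (two 1 c₂) := rfl

lemma sigma_emap_ne (g : Fin c₂ → Fin n) (hg : Function.Injective g) {l h : Fin 2}
    {i : Fin (two 1 c₂ l)} {j : Fin (two 1 c₂ h)}
    (hne : (⟨h, j⟩ : Σ h, Fin (two 1 c₂ h)) ≠ ⟨l, i⟩) :
    (⟨h, emap g h j⟩ : Σ h, Fin (two 1 n h)) ≠ ⟨l, emap g l i⟩ := by
  intro he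
  rcases Sigma.mk.inj_iff.mp he with ⟨hh, hj⟩
  subst hh
  exact hne (by rw [emap_inj g hg _ (eq_of_heq hj)])

lemma delay_proj (g : Fin c₂ → Fin n) {d : NNReal} {c c' : Config A (two 1 n)}
    (h : DelayStep d c c') : DelayStep d (projCfg g c) (projCfg g c') := by
  obtain ⟨h1, h2, h3⟩ := h
  refine ⟨?_, ?_, ?_⟩
  · funext l i; exact congrFun (congrFun h1 l) (emap g l i)
  · intro l i x; exact h2 l (emap g l i) x
  · intro l i d' hd'; exact h3 l (emap g l i) d' hd'

lemma sync_proj_in (g : Fin c₂ → Fin n) (hg : Function.Injective g)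
    {c c' : Config A (two 1 n)} {l : Fin 2} {i : Fin (two 1 c₂ l)}
    (h : ∃ tr ∈ A.trans l, tr.1 = c.st l (emap g l i) ∧ tr.2.1.sat (c.cl l (emap g l i)) ∧
      guardSat c l (emap g l i) tr.2.2.2.1 ∧ c'.st l (emap g l i) = tr.2.2.2.2 ∧
      (∀ x, (x ∈ tr.2.2.1 → c'.cl l (emap g l i) x = 0) ∧
        (x ∉ tr.2.2.1 → c'.cl l (emap g l i) x = c.cl l (emap g l i) x)) ∧
      (∀ p : Σ h, Fin (two 1 n h), p ≠ ⟨l, emap g l i⟩ →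
        c'.st p.1 p.2 = c.st p.1 p.2 ∧ c'.cl p.1 p.2 = c.cl p.1 p.2)) :
    SyncStep (projCfg g c) (projCfg g c') := by
  obtain ⟨tr, htr, h1, h2, h3, h4, h5, h6⟩ := h
  refine ⟨l, i, tr, htr, h1, h2, ?_, h4, fun x => h5 x, ?_⟩
  · rintro ⟨ph, pj⟩ hp
    exact h3 ⟨ph, emap g ph pj⟩ (sigma_emap_ne g hg hp)
  · rintro ⟨ph, pj⟩ hp
    exact h6 ⟨ph, emap g ph pj⟩ (sigma_emap_ne g hg hp)

lemma sync_proj_out (g : Fin c₂ → Fin n) {c c' : Config A (two 1 n)}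
    {p0 : Σ h, Fin (two 1 n h)}
    (hout : ∀ (h : Fin 2) (j : Fin (two 1 c₂ h)),
      (⟨h, emap g h j⟩ : Σ h, Fin (two 1 n h)) ≠ p0)
    (h6 : ∀ p : Σ h, Fin (two 1 n h), p ≠ p0 →
      c'.st p.1 p.2 = c.st p.1 p.2 ∧ c'.cl p.1 p.2 = c.cl p.1 p.2) :
    projCfg g c' = projCfg g c := by
  apply Config.ext'
  · funext l i; exact (h6 ⟨l, emap g l i⟩ (hout l i)).1
  · funext l i; exact (h6 ⟨l, emap g l i⟩ (hout l i)).2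

lemma step_proj (g : Fin c₂ → Fin n) (hg : Function.Injective g)
    {c c' : Config A (two 1 n)} {t t' : NNReal} (h : Step c c' t t') :
    Step (projCfg g c) (projCfg g c') t t' ∨ (projCfg g c' = projCfg g c ∧ t' = t) := by
  rcases h with ⟨d, hd, hD, ht⟩ | ⟨hS, ht⟩
  · exact Or.inl (Or.inl ⟨d, hd, delay_proj g hD, ht⟩)
  · obtain ⟨l, i, tr, htr, rest⟩ := hS
    by_cases hr : ∃ (h : Fin 2) (j : Fin (two 1 c₂ h)),
        (⟨h, emap g h j⟩ : Σ h, Fin (two 1 n h)) = ⟨l, i⟩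
    · obtain ⟨h, j, hej⟩ := hr
      rcases Sigma.mk.inj_iff.mp hej with ⟨hh, hj⟩
      subst hh
      have hji : emap g h j = i := eq_of_heq hj
      subst hji
      exact Or.inl (Or.inr ⟨sync_proj_in g hg ⟨tr, htr, rest⟩, ht⟩)
    · push_neg at hr
      exact Or.inr ⟨sync_proj_out g (fun h j => hr h j) rest.2.2.2.2.2, ht⟩

end CutoffProof


section Filtration

variable {k : ℕ}

lemma seq_isSome_mono {A : ConjPNTA k} {m : Fin k → ℕ} {c₀ : Config A m}
    (x : TimedComp A m c₀) {a b : ℕ} (hab : a ≤ b) (hb : (x.seq b).isSome) :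
    (x.seq a).isSome := by
  induction b with
  | zero =>
    have h0 : a = 0 := Nat.le_zero.mp hab
    subst h0; exact hb
  | succ b ih =>
    rcases Nat.lt_or_ge a (b + 1) with h | h
    · exact ih (by omega) (x.downward b hb)
    · have h1 : a = b + 1 := by omega
      subst h1; exact hb

lemma time_mono {A : ConjPNTA k} {m : Fin k → ℕ} {c₀ : Config A m}
    (x : TimedComp A m c₀) {a b : ℕ} (hab : a ≤ b) :
    ∀ {ca ta cb tb}, x.seq a = some (ca, ta) → x.seq b = some (cb, tb) → ta ≤ tb := by
  induction b, hab using Nat.le_induction with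
  | base =>
    intro ca ta cb tb h1 h2
    rw [h1] at h2
    cases h2
    exact le_refl _
  | succ b hb ih =>
    intro ca ta cb tb h1 h2
    have hsb : (x.seq b).isSome := x.downward b (by rw [h2]; rfl)
    obtain ⟨⟨c, t⟩, hc⟩ := Option.isSome_iff_exists.mp hsb
    have hle := ih h1 hc
    rcases x.step b c t cb tb hc h2 with ⟨d, hd, _, ht⟩ | ⟨_, ht⟩
    · subst ht; exact le_trans hle le_self_add
    · subst ht; exact hle

variable {n c₂ : ℕ} {A : ConjPNTA 2} {c₀ : Config A (two 1 n)}

/-- The step at position `u` of `x` is kept: it projects to a valid small step. -/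
def Keep (g : Fin c₂ → Fin n) (x : TimedComp A (two 1 n) c₀) (u : ℕ) : Prop :=
  ∃ c t c' t', x.seq u = some (c, t) ∧ x.seq (u + 1) = some (c', t') ∧
    Step (projCfg g c) (projCfg g c') t t'

lemma big_step_keep {g : Fin c₂ → Fin n} (hg : Function.Injective g)
    {x : TimedComp A (two 1 n) c₀} {u : ℕ} {c t c' t'}
    (h1 : x.seq u = some (c, t)) (h2 : x.seq (u + 1) = some (c', t'))
    (hnk : ¬ Keep g x u) : projCfg g c' = projCfg g c ∧ t' = t := by
  rcases step_proj g hg (x.step u c t c' t' h1 h2) with hs | hc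
  · exact absurd ⟨c, t, c', t', h1, h2, hs⟩ hnk
  · exact hc

lemma noKeep_const (g : Fin c₂ → Fin n) (hg : Function.Injective g)
    (x : TimedComp A (two 1 n) c₀) {a b : ℕ} (hab : a ≤ b)
    (hnk : ∀ u, a ≤ u → u < b → ¬ Keep g x u) :
    ∀ {ca ta cb tb}, x.seq a = some (ca, ta) → x.seq b = some (cb, tb) →
      projCfg g cb = projCfg g ca ∧ tb = ta := by
  induction b, hab using Nat.le_induction with
  | base =>
    intro ca ta cb tb h1 h2
    rw [h1] at h2; cases h2; exact ⟨rfl, rfl⟩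
  | succ b hb ih =>
    intro ca ta cb tb h1 h2
    have hsb : (x.seq b).isSome := x.downward b (by rw [h2]; rfl)
    obtain ⟨⟨c, t⟩, hc⟩ := Option.isSome_iff_exists.mp hsb
    obtain ⟨hpc, htc⟩ := ih (fun u hu hu' => hnk u hu (by omega)) h1 hc
    obtain ⟨hp2, ht2⟩ := big_step_keep hg hc h2 (hnk b hb (by omega))
    exact ⟨hp2.trans hpc, ht2.trans htc⟩

open Classical in
/-- Positions of the filtered computation inside `x`. -/
noncomputable def mseq (g : Fin c₂ → Fin n) (x : TimedComp A (two 1 n) c₀) : ℕ → Option ℕ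
  | 0 => some 0
  | w + 1 => (mseq g x w).bind fun v =>
      if h : ∃ u, v ≤ u ∧ Keep g x u then some (Nat.find h + 1) else none

lemma mseq_zero (g : Fin c₂ → Fin n) (x : TimedComp A (two 1 n) c₀) :
    mseq g x 0 = some 0 := rfl

lemma mseq_none_succ {g : Fin c₂ → Fin n} {x : TimedComp A (two 1 n) c₀} {w : ℕ}
    (h : mseq g x w = none) : mseq g x (w + 1) = none := by
  rw [mseq, h]; rfl

open Classical in
lemma mseq_succ_some {g : Fin c₂ → Fin n} {x : TimedComp A (two 1 n) c₀} {w v u' : ℕ}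
    (hw : mseq g x w = some v) (hw1 : mseq g x (w + 1) = some u') :
    ∃ u, u' = u + 1 ∧ v ≤ u ∧ Keep g x u ∧ ∀ u'', v ≤ u'' → u'' < u → ¬ Keep g x u'' := by
  rw [mseq, hw] at hw1
  simp only [Option.bind_some] at hw1
  split at hw1
  · rename_i h
    refine ⟨Nat.find h, by cases hw1; rfl, (Nat.find_spec h).1, (Nat.find_spec h).2, ?_⟩
    intro u'' h1 h2 hk
    exact Nat.find_min h h2 ⟨h1, hk⟩
  · cases hw1

open Classical in
lemma mseq_succ_none {g : Fin c₂ → Fin n} {x : TimedComp A (two 1 n) c₀} {w v : ℕ}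
    (hw : mseq g x w = some v) (hw1 : mseq g x (w + 1) = none) :
    ¬ ∃ u, v ≤ u ∧ Keep g x u := by
  rw [mseq, hw] at hw1
  simp only [Option.bind_some] at hw1
  split at hw1
  · cases hw1
  · assumption

open Classical in
lemma mseq_succ_of_keep {g : Fin c₂ → Fin n} {x : TimedComp A (two 1 n) c₀} {w v : ℕ}
    (hw : mseq g x w = some v) (h : ∃ u, v ≤ u ∧ Keep g x u) :
    (mseq g x (w + 1)).isSome := by
  rw [mseq, hw]
  simp only [Option.bind_some]
  rw [dif_pos h]
  rfl

lemma mseq_isSome {g : Fin c₂ → Fin n} {x : TimedComp A (two 1 n) c₀} :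
    ∀ {w v : ℕ}, mseq g x w = some v → (x.seq v).isSome := by
  intro w
  induction w with
  | zero =>
    intro v hv
    rw [mseq_zero] at hv
    cases hv
    rw [x.zero_def]; rfl
  | succ w ih =>
    intro v hv
    have hsome : (mseq g x w).isSome := by
      by_contra h
      rw [Option.not_isSome_iff_eq_none] at h
      rw [mseq_none_succ h] at hv
      cases hv
    obtain ⟨v₀, hv₀⟩ := Option.isSome_iff_exists.mp hsome
    obtain ⟨u, rfl, _, hk, _⟩ := mseq_succ_some hv₀ hv
    obtain ⟨c, t, c', t', _, h2, _⟩ := hk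
    rw [h2]; rfl

/-- The filtered small computation. -/
noncomputable def fcomp (g : Fin c₂ → Fin n) (hg : Function.Injective g)
    (x : TimedComp A (two 1 n) c₀) : TimedComp A (two 1 c₂) (projCfg g c₀) where
  seq := fun w => (mseq g x w).bind fun v =>
    (x.seq v).map fun ct => (projCfg g ct.1, ct.2)
  zero_def := by
    rw [mseq_zero]
    simp only [Option.bind_some]
    rw [x.zero_def]
    rfl
  downward := by
    intro w hw
    have hms : (mseq g x (w + 1)).isSome := by
      by_contra h
      rw [Option.not_isSome_iff_eq_none] at h
      rw [h] at hw
      cases hw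
    obtain ⟨v', hv'⟩ := Option.isSome_iff_exists.mp hms
    have hmw : (mseq g x w).isSome := by
      by_contra h
      rw [Option.not_isSome_iff_eq_none] at h
      rw [mseq_none_succ h] at hv'
      cases hv'
    obtain ⟨v, hv⟩ := Option.isSome_iff_exists.mp hmw
    have := mseq_isSome hv
    obtain ⟨⟨c, t⟩, hc⟩ := Option.isSome_iff_exists.mp this
    simp only [hv, hc, Option.bind_some, Option.map_some]
    rfl
  step := by
    intro w c t c' t' hw hw1
    simp only [Option.bind_eq_some_iff, Option.map_eq_some_iff] at hw hw1
    obtain ⟨v, hv, ⟨cv, tv⟩, hxv, hctv⟩ := hw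
    obtain ⟨u', hu', ⟨cu', tu'⟩, hxu', hctu'⟩ := hw1
    cases hctv; cases hctu'
    obtain ⟨u, rfl, hvu, hk, hmin⟩ := mseq_succ_some hv hu'
    obtain ⟨cu, tu, cu1, tu1, hxu, hxu1, hstep⟩ := hk
    rw [hxu'] at hxu1
    cases hxu1
    obtain ⟨hpc, htc⟩ := noKeep_const g hg x hvu (fun u'' h1 h2 => hmin u'' h1 h2) hxv hxu
    rw [hpc, htc] at hstep
    exact hstep

end Filtration


section Transfer

variable {n c₂ : ℕ} {A : ConjPNTA 2} {c₀ : Config A (two 1 n)}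

/-- Projection of an s-path of the big system. -/
def projSPath (g : Fin c₂ → Fin n) (ρ : SPath A (two 1 n)) : SPath A (two 1 c₂) where
  len := ρ.len
  toFun := fun t => projCfg g (ρ.toFun t)

lemma fcomp_seq (g : Fin c₂ → Fin n) (hg : Function.Injective g)
    (x : TimedComp A (two 1 n) c₀) (w : ℕ) :
    (fcomp g hg x).seq w = (mseq g x w).bind fun v =>
      (x.seq v).map fun ct => (projCfg g ct.1, ct.2) := rfl

lemma fcomp_seq_some {g : Fin c₂ → Fin n} {hg : Function.Injective g}
    {x : TimedComp A (two 1 n) c₀} {w : ℕ} {c : Config A (two 1 c₂)} {t : NNReal}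
    (h : (fcomp g hg x).seq w = some (c, t)) :
    ∃ v cv, mseq g x w = some v ∧ x.seq v = some (cv, t) ∧ c = projCfg g cv := by
  rw [fcomp_seq] at h
  simp only [Option.bind_eq_some_iff, Option.map_eq_some_iff] at h
  obtain ⟨v, hv, ⟨cv, tv⟩, hxv, hct⟩ := h
  cases hct
  exact ⟨v, cv, hv, hxv, rfl⟩

lemma fcomp_none {g : Fin c₂ → Fin n} {hg : Function.Injective g}
    {x : TimedComp A (two 1 n) c₀} {w : ℕ} :
    (fcomp g hg x).seq w = none ↔ mseq g x w = none := by
  rw [fcomp_seq]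
  constructor
  · intro h
    by_contra hne
    obtain ⟨v, hv⟩ := Option.ne_none_iff_exists'.mp hne
    obtain ⟨⟨cv, tv⟩, hc⟩ := Option.isSome_iff_exists.mp (mseq_isSome hv)
    rw [hv] at h
    simp only [Option.bind_some] at h
    rw [hc] at h
    cases h
  · intro h; rw [h]; rfl

lemma mseq_ge {g : Fin c₂ → Fin n} {x : TimedComp A (two 1 n) c₀} :
    ∀ {w v : ℕ}, mseq g x w = some v → w ≤ v := by
  intro w
  induction w with
  | zero => intro v _; omega
  | succ w ih =>
    intro v hv
    have hsome : (mseq g x w).isSome := by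
      by_contra h
      rw [Option.not_isSome_iff_eq_none] at h
      rw [mseq_none_succ h] at hv
      cases hv
    obtain ⟨v₀, hv₀⟩ := Option.isSome_iff_exists.mp hsome
    obtain ⟨u, rfl, hvu, _, _⟩ := mseq_succ_some hv₀ hv
    have := ih hv₀
    omega

lemma fcomp_infinite {g : Fin c₂ → Fin n} {hg : Function.Injective g}
    {x : TimedComp A (two 1 n) c₀} (hK : {u | Keep g x u}.Infinite) :
    (fcomp g hg x).Infinite := by
  intro w
  have hms : ∀ w, (mseq g x w).isSome := by
    intro w
    induction w with
    | zero => rw [mseq_zero]; rfl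
    | succ w ih =>
      obtain ⟨v, hv⟩ := Option.isSome_iff_exists.mp ih
      obtain ⟨u, hu, hlt⟩ := hK.exists_gt v
      exact mseq_succ_of_keep hv ⟨u, le_of_lt hlt, hu⟩
  obtain ⟨v, hv⟩ := Option.isSome_iff_exists.mp (hms w)
  obtain ⟨⟨cv, tv⟩, hc⟩ := Option.isSome_iff_exists.mp (mseq_isSome hv)
  rw [fcomp_seq, hv]
  simp only [Option.bind_some]
  rw [hc]
  rfl

lemma fcomp_finite {g : Fin c₂ → Fin n} {hg : Function.Injective g}
    {x : TimedComp A (two 1 n) c₀} (hfin : ∃ v, x.seq v = none) :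
    (fcomp g hg x).Finite := by
  by_contra h
  rw [TimedComp.Finite] at h
  push_neg at h
  obtain ⟨b, hb⟩ := hfin
  have hbs : ((fcomp g hg x).seq b).isSome := Option.ne_none_iff_isSome.mp (h b)
  obtain ⟨⟨c, t⟩, hc⟩ := Option.isSome_iff_exists.mp hbs
  obtain ⟨v, cv, hv, hxv, _⟩ := fcomp_seq_some hc
  have : (x.seq b).isSome := seq_isSome_mono x (mseq_ge hv) (by rw [hxv]; rfl)
  rw [hb] at this
  cases this

lemma x_infinite_of_fcomp {g : Fin c₂ → Fin n} {hg : Function.Injective g}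
    {x : TimedComp A (two 1 n) c₀} (h : (fcomp g hg x).Infinite) : x.Infinite := by
  intro u
  have hu := h u
  obtain ⟨⟨c, t⟩, hc⟩ := Option.isSome_iff_exists.mp hu
  obtain ⟨v, cv, hv, hxv, _⟩ := fcomp_seq_some hc
  exact seq_isSome_mono x (mseq_ge hv) (by rw [hxv]; rfl)

lemma timeAt_eq {k : ℕ} {A : ConjPNTA k} {m : Fin k → ℕ} {c₀ : Config A m}
    (x : TimedComp A m c₀) {v : ℕ} {c t} (h : x.seq v = some (c, t)) :
    x.timeAt v = t := by
  rw [TimedComp.timeAt, h]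
  rfl

lemma fcomp_induces (g : Fin c₂ → Fin n) (hg : Function.Injective g)
    (x : TimedComp A (two 1 n) c₀) (ρ : SPath A (two 1 n)) (hx : Induces x ρ)
    (hside : (∃ v, x.seq v = none) ∨ {u | Keep g x u}.Infinite) :
    Induces (fcomp g hg x) (projSPath g ρ) := by
  obtain ⟨H1, H2, H3⟩ := hx
  refine ⟨?_, ?_, ?_⟩
  · -- condition (1)
    intro w c t c' t' hw hw1 s hs1 hs2
    obtain ⟨v, cv, hv, hxv, rfl⟩ := fcomp_seq_some hw
    obtain ⟨v', cv', hv', hxv', rfl⟩ := fcomp_seq_some hw1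
    obtain ⟨u, rfl, hvu, hk, hmin⟩ := mseq_succ_some hv hv'
    obtain ⟨cu, tu, cu1, tu1, hxu, hxu1, _⟩ := hk
    rw [hxv'] at hxu1; cases hxu1
    obtain ⟨hpc, htc⟩ := noKeep_const g hg x hvu hmin hxv hxu
    obtain ⟨hst, hcl⟩ := H1 u cu tu cv' t' hxu hxv' s (by rw [htc]; exact hs1) hs2
    constructor
    · funext l i
      show (ρ.toFun s).st l (emap g l i) = cv.st l (emap g l i)
      rw [hst]
      exact congrFun (congrFun (congrArg Config.st hpc) l) i
    · intro l i cx
      show (ρ.toFun s).cl l (emap g l i) cx = cv.cl l (emap g l i) cx + (s - t)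
      rw [hcl l (emap g l i) cx, htc]
      congr 1
      exact congrFun (congrFun (congrFun (congrArg Config.cl hpc) l) i) cx
  · -- condition (2)
    intro hinf
    have hxinf : x.Infinite := x_infinite_of_fcomp hinf
    have hlen := H2 hxinf
    show ρ.len = _
    rw [hlen]
    apply le_antisymm
    · apply iSup_le
      intro u
      obtain ⟨⟨c', t'⟩, hc'⟩ := Option.isSome_iff_exists.mp (hinf u)
      obtain ⟨v, cv, hv, hxv, _⟩ := fcomp_seq_some hc'
      obtain ⟨⟨cu, tu⟩, hcu⟩ := Option.isSome_iff_exists.mp (hxinf u)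
      have h1 : x.timeAt u ≤ x.timeAt v := by
        rw [timeAt_eq x hcu, timeAt_eq x hxv]
        exact time_mono x (mseq_ge hv) hcu hxv
      have h2 : x.timeAt v = (fcomp g hg x).timeAt u := by
        rw [timeAt_eq x hxv, timeAt_eq _ hc']
      calc ((x.timeAt u : NNReal) : ℝ≥0∞) ≤ (x.timeAt v : ℝ≥0∞) := by
            exact_mod_cast h1
        _ = ((fcomp g hg x).timeAt u : ℝ≥0∞) := by rw [h2]
        _ ≤ _ := le_iSup (fun w => (((fcomp g hg x).timeAt w : NNReal) : ℝ≥0∞)) u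
    · apply iSup_le
      intro w
      obtain ⟨⟨c', t'⟩, hc'⟩ := Option.isSome_iff_exists.mp (hinf w)
      obtain ⟨v, cv, hv, hxv, _⟩ := fcomp_seq_some hc'
      have h2 : (fcomp g hg x).timeAt w = x.timeAt v := by
        rw [timeAt_eq x hxv, timeAt_eq _ hc']
      rw [h2]
      exact le_iSup (fun v => ((x.timeAt v : NNReal) : ℝ≥0∞)) v
  · -- condition (3)
    intro w c t hw hw1
    obtain ⟨v, cv, hv, hxv, rfl⟩ := fcomp_seq_some hw
    have hnk : ¬ ∃ u, v ≤ u ∧ Keep g x u := mseq_succ_none hv (fcomp_none.mp hw1)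
    have hxfin : ∃ b, x.seq b = none := by
      rcases hside with h | h
      · exact h
      · obtain ⟨u, hu, hlt⟩ := h.exists_gt v
        exact absurd ⟨u, le_of_lt hlt, hu⟩ hnk
    classical
    have hex : ∃ b, x.seq b = none := hxfin
    set b₀ := Nat.find hex with hb₀def
    have hb₀ : x.seq b₀ = none := Nat.find_spec hex
    have hvb : v < b₀ := by
      by_contra hc
      push_neg at hc
      have : (x.seq b₀).isSome := seq_isSome_mono x hc (by rw [hxv]; rfl)
      rw [hb₀] at this; cases this
    have hb₀pos : 0 < b₀ := by omega
    have hmsome : (x.seq (b₀ - 1)).isSome := by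
      by_contra hc
      rw [Option.not_isSome_iff_eq_none] at hc
      exact absurd hc (Nat.find_min hex (by omega))
    obtain ⟨⟨cm, tm⟩, hcm⟩ := Option.isSome_iff_exists.mp hmsome
    have hnone : x.seq (b₀ - 1 + 1) = none := by
      rw [show b₀ - 1 + 1 = b₀ by omega]
      exact hb₀
    obtain ⟨hpc, htc⟩ := noKeep_const g hg x (show v ≤ b₀ - 1 by omega)
      (fun u hu _ => fun hk => hnk ⟨u, hu, hk⟩) hxv hcm
    obtain ⟨hlen, hst, hcl⟩ := H3 (b₀ - 1) cm tm hcm hnone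
    rw [htc] at hlen hst hcl
    refine ⟨hlen, ?_, ?_⟩
    · funext l i
      show (ρ.toFun t).st l (emap g l i) = cv.st l (emap g l i)
      rw [hst]
      exact congrFun (congrFun (congrArg Config.st hpc) l) i
    · intro l i cx
      show (ρ.toFun t).cl l (emap g l i) cx = cv.cl l (emap g l i) cx
      rw [hcl l (emap g l i) cx]
      exact congrFun (congrFun (congrFun (congrArg Config.cl hpc) l) i) cx

lemma fcomp_final {g : Fin c₂ → Fin n} {hg : Function.Injective g}
    {x : TimedComp A (two 1 n) c₀} {vD : ℕ} {cD : Config A (two 1 n)} {tD : NNReal}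
    (hD : x.seq vD = some (cD, tD)) (hDn : x.seq (vD + 1) = none) :
    ∃ w t, (fcomp g hg x).seq w = some (projCfg g cD, t) ∧
      (fcomp g hg x).seq (w + 1) = none := by
  classical
  have hfin : (fcomp g hg x).Finite := fcomp_finite ⟨vD + 1, hDn⟩
  obtain ⟨b, hb⟩ := hfin
  have hex : ∃ w, (fcomp g hg x).seq w = none := ⟨b, hb⟩
  set w₀ := Nat.find hex with hw₀def
  have hw₀ : (fcomp g hg x).seq w₀ = none := Nat.find_spec hex
  have hw₀pos : 0 < w₀ := by
    rcases Nat.eq_zero_or_pos w₀ with h | h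
    · rw [h, (fcomp g hg x).zero_def] at hw₀; cases hw₀
    · exact h
  have hwsome : ((fcomp g hg x).seq (w₀ - 1)).isSome := by
    by_contra hc
    rw [Option.not_isSome_iff_eq_none] at hc
    exact absurd hc (Nat.find_min hex (by omega))
  obtain ⟨⟨cw, tw⟩, hcw⟩ := Option.isSome_iff_exists.mp hwsome
  obtain ⟨v, cv, hv, hxv, rfl⟩ := fcomp_seq_some hcw
  have hnone1 : (fcomp g hg x).seq (w₀ - 1 + 1) = none := by
    rw [show w₀ - 1 + 1 = w₀ by omega]; exact hw₀
  have hnk : ¬ ∃ u, v ≤ u ∧ Keep g x u := mseq_succ_none hv (fcomp_none.mp hnone1)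
  have hvD : v ≤ vD := by
    by_contra hc
    push_neg at hc
    have : (x.seq (vD + 1)).isSome :=
      seq_isSome_mono x (a := vD + 1) (b := v) (by omega) (by rw [hxv]; rfl)
    rw [hDn] at this; cases this
  obtain ⟨hpc, htc⟩ := noKeep_const g hg x hvD
    (fun u hu _ => fun hk => hnk ⟨u, hu, hk⟩) hxv hD
  refine ⟨w₀ - 1, tw, ?_, hnone1⟩
  rw [hpc]
  exact hcw

end Transfer


section SatTransfer

variable {n c₂ : ℕ} {A : ConjPNTA 2}

lemma sat_transfer (g : Fin c₂ → Fin n) (hp' : 0 < two 1 c₂ 1) (hp : 0 < two 1 n 1)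
    (hg0 : emap g 1 ⟨0, hp'⟩ = ⟨0, hp⟩) (Φ : IMTL (A.State 1)) :
    ∀ ρ : SPath A (two 1 n),
      satIMTL (valFirst A (two 1 c₂) 1 hp') Φ (projSPath g ρ) ↔
        satIMTL (valFirst A (two 1 n) 1 hp) Φ ρ := by
  induction Φ with
  | tt => intro ρ; exact Iff.rfl
  | atom a =>
    intro ρ
    show (ρ.toFun 0).st 1 (emap g 1 ⟨0, hp'⟩) = a ↔ (ρ.toFun 0).st 1 ⟨0, hp⟩ = a
    rw [hg0]
  | and φ ψ ihφ ihψ => intro ρ; exact and_congr (ihφ ρ) (ihψ ρ)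
  | not φ ih => intro ρ; exact not_congr (ih ρ)
  | untl op q φ ψ ihφ ihψ =>
    intro ρ
    constructor
    · rintro ⟨t', h1, h2, h3, h4⟩
      exact ⟨t', h1, h2, (ihψ (ρ.suffix t')).mp h3,
        fun t ht => (ihφ (ρ.suffix t)).mp (h4 t ht)⟩
    · rintro ⟨t', h1, h2, h3, h4⟩
      exact ⟨t', h1, h2, (ihψ (ρ.suffix t')).mpr h3,
        fun t ht => (ihφ (ρ.suffix t)).mpr (h4 t ht)⟩

lemma exists_inj (hcn : c₂ ≤ n) (hc : 0 < c₂) (hn : 0 < n) (T : Finset (Fin n))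
    (hT : T.card ≤ c₂) (h0 : ⟨0, hn⟩ ∈ T) :
    ∃ g : Fin c₂ → Fin n, Function.Injective g ∧ g ⟨0, hc⟩ = ⟨0, hn⟩ ∧
      ∀ q ∈ T, ∃ i, g i = q := by
  obtain ⟨T', hTT', hT'⟩ := Finset.exists_superset_card_eq hT (by simpa using hcn)
  have h0' : (⟨0, hn⟩ : Fin n) ∈ T' := hTT' h0
  let e : {x // x ∈ T'} ≃ Fin c₂ := Finset.equivFinOfCardEq hT'
  let z : Fin c₂ := e ⟨⟨0, hn⟩, h0'⟩
  refine ⟨fun i => (e.symm (Equiv.swap ⟨0, hc⟩ z i) : Fin n), ?_, ?_, ?_⟩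
  · intro a b hab
    exact (Equiv.swap _ _).injective (e.symm.injective (Subtype.coe_injective hab))
  · show (e.symm (Equiv.swap ⟨0, hc⟩ z ⟨0, hc⟩) : Fin n) = ⟨0, hn⟩
    rw [Equiv.swap_apply_left]
    show ((e.symm (e ⟨⟨0, hn⟩, h0'⟩)) : Fin n) = ⟨0, hn⟩
    rw [Equiv.symm_apply_apply]
  · intro q hq
    refine ⟨Equiv.swap ⟨0, hc⟩ z (e ⟨q, hTT' hq⟩), ?_⟩
    show (e.symm (Equiv.swap ⟨0, hc⟩ z (Equiv.swap ⟨0, hc⟩ z (e ⟨q, hTT' hq⟩))) : Fin n) = q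
    rw [Equiv.swap_apply_self, Equiv.symm_apply_apply]

lemma pigeonhole_nat {β : Type*} [Finite β] (f : ℕ → β) :
    ∃ b, ∀ N, ∃ m, N ≤ m ∧ f m = b := by
  obtain ⟨b, hb⟩ := Finite.exists_infinite_fiber f
  refine ⟨b, fun N => ?_⟩
  have hinf : (f ⁻¹' {b}).Infinite := Set.infinite_coe_iff.mp hb
  obtain ⟨m, hm, hlt⟩ := hinf.exists_gt N
  exact ⟨m, le_of_lt hlt, hm⟩

/-- The synchronization step from `c` to `c'` is fired by instance `(l, i)` of the big system. -/
abbrev FiredBy (c c' : Config A (two 1 n)) (l : Fin 2) (i : Fin (two 1 n l)) : Prop :=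
  ∃ tr ∈ A.trans l, tr.1 = c.st l i ∧ tr.2.1.sat (c.cl l i) ∧
    guardSat c l i tr.2.2.2.1 ∧ c'.st l i = tr.2.2.2.2 ∧
    (∀ x, (x ∈ tr.2.2.1 → c'.cl l i x = 0) ∧ (x ∉ tr.2.2.1 → c'.cl l i x = c.cl l i x)) ∧
    (∀ p : Σ h, Fin (two 1 n h), p ≠ ⟨l, i⟩ →
      c'.st p.1 p.2 = c.st p.1 p.2 ∧ c'.cl p.1 p.2 = c.cl p.1 p.2)

lemma keep_of_inrange {g : Fin c₂ → Fin n} (hg : Function.Injective g)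
    {c₀ : Config A (two 1 n)} {x : TimedComp A (two 1 n) c₀} {u : ℕ}
    {c t c' t'} (h1 : x.seq u = some (c, t)) (h2 : x.seq (u + 1) = some (c', t'))
    {l : Fin 2} {j : Fin (two 1 c₂ l)} (hf : FiredBy c c' l (emap g l j)) :
    Keep g x u := by
  rcases x.step u c t c' t' h1 h2 with ⟨d, hd, hD, ht⟩ | ⟨_, ht⟩
  · exact ⟨c, t, c', t', h1, h2, Or.inl ⟨d, hd, delay_proj g hD, ht⟩⟩
  · exact ⟨c, t, c', t', h1, h2, Or.inr ⟨sync_proj_in g hg hf, ht⟩⟩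

open Classical in
lemma exists_g_keep_infinite (hc2 : 2 ≤ c₂) (hcn : c₂ ≤ n)
    {c₀ : Config A (two 1 n)} (x : TimedComp A (two 1 n) c₀) (hx : x.Infinite) :
    ∃ g : Fin c₂ → Fin n, Function.Injective g ∧ g ⟨0, by omega⟩ = ⟨0, by omega⟩ ∧
      {u | Keep g x u}.Infinite := by
  have hc : 0 < c₂ := by omega
  have hn : 0 < n := by omega
  set F : ℕ → Option (Σ l : Fin 2, Fin (two 1 n l)) := fun u =>
    if h : ∃ p : (Σ l : Fin 2, Fin (two 1 n l)), ∃ c t c' t',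
        x.seq u = some (c, t) ∧ x.seq (u + 1) = some (c', t') ∧ FiredBy c c' p.1 p.2
      then some h.choose else none with hF
  have hFspec : ∀ u p, F u = some p → ∃ c t c' t',
      x.seq u = some (c, t) ∧ x.seq (u + 1) = some (c', t') ∧ FiredBy c c' p.1 p.2 := by
    intro u p hp
    rw [hF] at hp
    dsimp only at hp
    split at hp
    · rename_i h
      cases hp
      exact h.choose_spec
    · cases hp
  have hFnone : ∀ u, F u = none → ∀ (g : Fin c₂ → Fin n), Keep g x u := by
    intro u hu g
    obtain ⟨⟨c, t⟩, h1⟩ := Option.isSome_iff_exists.mp (hx u)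
    obtain ⟨⟨c', t'⟩, h2⟩ := Option.isSome_iff_exists.mp (hx (u + 1))
    rcases x.step u c t c' t' h1 h2 with ⟨d, hd, hD, ht⟩ | ⟨hS, ht⟩
    · exact ⟨c, t, c', t', h1, h2, Or.inl ⟨d, hd, delay_proj g hD, ht⟩⟩
    · obtain ⟨l, i, tr, htr, rest⟩ := hS
      have : ∃ p : (Σ l : Fin 2, Fin (two 1 n l)), ∃ c t c' t',
          x.seq u = some (c, t) ∧ x.seq (u + 1) = some (c', t') ∧ FiredBy c c' p.1 p.2 :=
        ⟨⟨l, i⟩, c, t, c', t', h1, h2, tr, htr, rest⟩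
      rw [hF] at hu
      dsimp only at hu
      rw [dif_pos this] at hu
      cases hu
  obtain ⟨o, ho⟩ := pigeonhole_nat F
  have hKeepOf : ∀ (g : Fin c₂ → Fin n), Function.Injective g →
      (∀ p, o = some p → ∃ (j : Fin (two 1 c₂ p.1)), emap g p.1 j = p.2) →
      {u | Keep g x u}.Infinite := by
    intro g hg hrange
    apply Set.infinite_of_not_bddAbove
    rintro ⟨N, hN⟩
    obtain ⟨m, hm, hFm⟩ := ho (N + 1)
    have hkm : Keep g x m := by
      cases ho' : o with
      | none => exact hFnone m (by rw [hFm, ho']) g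
      | some p =>
        rw [ho'] at hFm
        obtain ⟨c, t, c', t', h1, h2, hf⟩ := hFspec m p hFm
        obtain ⟨j, hj⟩ := hrange p ho'
        rcases p with ⟨l, q⟩
        rw [← hj] at hf
        exact keep_of_inrange hg h1 h2 hf
    have := hN (show m ∈ {u | Keep g x u} from hkm)
    omega
  cases ho' : o with
  | none =>
    obtain ⟨g, hg, hg0, _⟩ := exists_inj hcn hc hn {⟨0, hn⟩} (by simp; omega) (by simp)
    refine ⟨g, hg, hg0, hKeepOf g hg ?_⟩
    intro p hp
    rw [ho'] at hp
    cases hp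
  | some p =>
    rcases p with ⟨l, q⟩
    by_cases hl : l.val = 0
    · obtain ⟨g, hg, hg0, _⟩ := exists_inj hcn hc hn {⟨0, hn⟩} (by simp; omega) (by simp)
      refine ⟨g, hg, hg0, hKeepOf g hg ?_⟩
      rintro p hp
      rw [ho'] at hp
      cases hp
      exact emap_zero_surj g hl q
    · have hl1 : l = 1 := Fin.ext (by omega)
      subst hl1
      obtain ⟨g, hg, hg0, hr⟩ := exists_inj hcn hc hn (insert (@id (Fin n) q) {⟨0, hn⟩})
        (le_trans (Finset.card_insert_le _ _) (by simp; omega)) (by simp)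
      refine ⟨g, hg, hg0, hKeepOf g hg ?_⟩
      rintro p hp
      rw [ho'] at hp
      cases hp
      obtain ⟨i, hi⟩ := hr q (Finset.mem_insert_self _ _)
      exact ⟨i, hi⟩

end SatTransfer


section Deadlock

variable {n c₂ : ℕ} {A : ConjPNTA 2}

lemma sigma_snd_eq {m : Fin 2 → ℕ} {h : Fin 2} {a b : Fin (m h)}
    (he : (⟨h, a⟩ : Σ l, Fin (m l)) = ⟨h, b⟩) : a = b :=
  eq_of_heq (Sigma.mk.inj_iff.mp he).2

lemma delay_violation {m : Fin 2 → ℕ} {c : Config A m}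
    (Hd : ∀ c' : Config A m, ¬ (∃ d, 0 < d ∧ DelayStep d c c')) {d : NNReal} (hd : 0 < d) :
    ∃ (p : Σ l, Fin (m l)) (d' : NNReal), d' ≤ d ∧
      ¬ (A.inv p.1 (c.st p.1 p.2)).sat (fun xx => c.cl p.1 p.2 xx + d') := by
  by_contra h
  push_neg at h
  exact Hd ⟨c.st, fun l i xx => c.cl l i xx + d, fun l i => h ⟨l, i⟩ d (le_refl d)⟩
    ⟨d, hd, rfl, fun l i xx => rfl, fun l i d' hd' => h ⟨l, i⟩ d' hd'⟩

lemma exists_pstar {m : Fin 2 → ℕ} {c : Config A m}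
    (Hd : ∀ c' : Config A m, ¬ (∃ d, 0 < d ∧ DelayStep d c c')) :
    ∃ p : Σ l, Fin (m l), ∀ d : NNReal, 0 < d → ∃ d', d' ≤ d ∧
      ¬ (A.inv p.1 (c.st p.1 p.2)).sat (fun xx => c.cl p.1 p.2 xx + d') := by
  classical
  have hvio : ∀ kk : ℕ, ∃ (p : Σ l, Fin (m l)) (d' : NNReal),
      d' ≤ ((kk : NNReal) + 1)⁻¹ ∧
      ¬ (A.inv p.1 (c.st p.1 p.2)).sat (fun xx => c.cl p.1 p.2 xx + d') := by
    intro kk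
    exact delay_violation Hd (by positivity)
  choose P D hD hsat using hvio
  obtain ⟨p, hp⟩ := pigeonhole_nat P
  refine ⟨p, fun d hd => ?_⟩
  obtain ⟨k₀, hk₀⟩ := exists_nat_gt (d⁻¹ : NNReal)
  obtain ⟨m₁, hm₁, hPm⟩ := hp k₀
  have hinv : ((m₁ : NNReal) + 1)⁻¹ ≤ d := by
    have h1 : (d⁻¹ : NNReal) < (m₁ : NNReal) + 1 := by
      refine lt_of_lt_of_le hk₀ ?_
      have : (k₀ : NNReal) ≤ (m₁ : NNReal) := by exact_mod_cast hm₁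
      exact le_trans this le_self_add
    have h2 : ((m₁ : NNReal) + 1)⁻¹ < (d⁻¹)⁻¹ :=
      NNReal.inv_lt_inv (by positivity) h1
    exact le_of_lt (by rwa [inv_inv] at h2)
  refine ⟨D m₁, le_trans (hD m₁) hinv, ?_⟩
  rw [← hPm]
  exact hsat m₁

open Classical in
lemma tcon {α β : Type*} [Fintype α] [DecidableEq α] [Fintype β] (f : α → β) (pres : Finset α)
    (hpres : pres.card ≤ 2) :
    ∃ T : Finset α, pres ⊆ T ∧ T.card ≤ 2 * Fintype.card β ∧
      ∀ a : α, min 2 (Finset.univ.filter (fun b => f b = f a)).card ≤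
        (T ∩ Finset.univ.filter (fun b => f b = f a)).card := by
  classical
  have hex : ∀ s : β, ∃ Ts : Finset α, (pres.filter (fun b => f b = s)) ⊆ Ts ∧
      Ts ⊆ Finset.univ.filter (fun b => f b = s) ∧
      Ts.card = max (pres.filter (fun b => f b = s)).card
        (min 2 (Finset.univ.filter (fun b => f b = s)).card) := by
    intro s
    apply Finset.exists_subsuperset_card_eq
      (Finset.filter_subset_filter _ (Finset.subset_univ pres))
      (le_max_left _ _)
    exact max_le (Finset.card_le_card (Finset.filter_subset_filter _ (Finset.subset_univ pres)))
      (min_le_right _ _)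
  choose Ts h1 h2 h3 using hex
  have hTs2 : ∀ s, (Ts s).card ≤ 2 := by
    intro s
    rw [h3 s]
    exact max_le (le_trans (Finset.card_filter_le _ _) hpres) (min_le_left _ _)
  refine ⟨Finset.univ.biUnion Ts, ?_, ?_, ?_⟩
  · intro a ha
    exact Finset.mem_biUnion.mpr ⟨f a, Finset.mem_univ _,
      h1 (f a) (Finset.mem_filter.mpr ⟨ha, rfl⟩)⟩
  · calc (Finset.univ.biUnion Ts).card ≤ ∑ s, (Ts s).card := Finset.card_biUnion_le
      _ ≤ ∑ _s : β, 2 := Finset.sum_le_sum (fun s _ => hTs2 s)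
      _ = Fintype.card β * 2 := by rw [Finset.sum_const, Finset.card_univ, smul_eq_mul]
      _ = 2 * Fintype.card β := mul_comm _ _
  · intro a
    have hsub : Ts (f a) ⊆ Finset.univ.biUnion Ts ∩ Finset.univ.filter (fun b => f b = f a) :=
      Finset.subset_inter (fun y hy => Finset.mem_biUnion.mpr ⟨f a, Finset.mem_univ _, hy⟩)
        (h2 (f a))
    refine le_trans ?_ (Finset.card_le_card hsub)
    rw [h3 (f a)]
    exact le_max_right _ _

open Classical in
lemma small_deadlock (g : Fin c₂ → Fin n) (hg : Function.Injective g)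
    {c : Config A (two 1 n)}
    (Hd : ∀ c' : Config A (two 1 n), ¬ ((∃ d, 0 < d ∧ DelayStep d c c') ∨ SyncStep c c'))
    (Hinv : ∃ li : Σ l : Fin 2, Fin (two 1 c₂ l), ∀ d : NNReal, 0 < d → ∃ d', d' ≤ d ∧
      ¬ (A.inv li.1 (c.st li.1 (emap g li.1 li.2))).sat
        (fun xx => c.cl li.1 (emap g li.1 li.2) xx + d'))
    (HP2 : ∀ q : Fin (two 1 n 1), ∃ i', c.st 1 (emap g 1 i') = c.st 1 q ∧
      (emap g 1 i' = q ∨ ∃ i'', i'' ≠ i' ∧ c.st 1 (emap g 1 i'') = c.st 1 q)) :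
    ∀ c'' : Config A (two 1 c₂),
      ¬ ((∃ d, 0 < d ∧ DelayStep d (projCfg g c) c'') ∨ SyncStep (projCfg g c) c'') := by
  intro c'' hstep
  rcases hstep with ⟨d, hd, _, _, hi3⟩ | hS
  · obtain ⟨li, hli⟩ := Hinv
    obtain ⟨d', hd', hviol⟩ := hli d hd
    exact hviol (hi3 li.1 li.2 d' hd')
  · obtain ⟨l, i_s, tr, htr, h1, h2, h3, h4, h5, h6⟩ := hS
    set P0 : Σ l : Fin 2, Fin (two 1 n l) := ⟨l, emap g l i_s⟩ with hP0
    let st' : ∀ p : Σ h : Fin 2, Fin (two 1 n h), A.State p.1 :=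
      Function.update (fun p : Σ h : Fin 2, Fin (two 1 n h) => c.st p.1 p.2) P0 tr.2.2.2.2
    let cl' : ∀ p : Σ h : Fin 2, Fin (two 1 n h), A.Clock p.1 → NNReal :=
      Function.update (fun p : Σ h : Fin 2, Fin (two 1 n h) => c.cl p.1 p.2) P0
        (c''.cl l i_s)
    have hinv' : ∀ p : Σ h : Fin 2, Fin (two 1 n h),
        (A.inv p.1 (st' p)).sat (cl' p) := by
      intro p
      by_cases hp : p = P0
      · subst hp
        show (A.inv P0.1 (st' P0)).sat (cl' P0)
        have e1 : st' P0 = tr.2.2.2.2 := Function.update_self _ _ _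
        have e2 : cl' P0 = c''.cl l i_s := Function.update_self _ _ _
        rw [e1, e2]
        have := c''.inv_sat l i_s
        rw [h4] at this
        exact this
      · have e1 : st' p = c.st p.1 p.2 := Function.update_of_ne hp _ _
        have e2 : cl' p = c.cl p.1 p.2 := Function.update_of_ne hp _ _
        rw [e1, e2]
        exact c.inv_sat p.1 p.2
    set cBig : Config A (two 1 n) :=
      ⟨fun h j => st' ⟨h, j⟩, fun h j => cl' ⟨h, j⟩, fun h j => hinv' ⟨h, j⟩⟩ with hcBig
    have hguard : ¬ guardSat c l (emap g l i_s) tr.2.2.2.1 := by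
      intro hgu
      apply Hd cBig
      right
      refine ⟨l, emap g l i_s, tr, htr, h1, h2, hgu, ?_, ?_, ?_⟩
      · show st' P0 = tr.2.2.2.2
        exact Function.update_self _ _ _
      · intro xx
        have e2 : cl' P0 = c''.cl l i_s := Function.update_self _ _ _
        constructor
        · intro hxx
          show cl' P0 xx = 0
          rw [e2]
          exact (h5 xx).1 hxx
        · intro hxx
          show cl' P0 xx = c.cl l (emap g l i_s) xx
          rw [e2]
          exact (h5 xx).2 hxx
      · intro p hp
        have e1 : st' p = c.st p.1 p.2 := Function.update_of_ne hp _ _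
        have e2 : cl' p = c.cl p.1 p.2 := Function.update_of_ne hp _ _
        exact ⟨show st' ⟨p.1, p.2⟩ = _ by rw [← Sigma.eta p] at e1; exact e1,
          show cl' ⟨p.1, p.2⟩ = _ by rw [← Sigma.eta p] at e2; exact e2⟩
    rw [guardSat] at hguard
    push_neg at hguard
    obtain ⟨⟨ph, q⟩, hpne, hqnot⟩ := hguard
    by_cases hph : ph.val = 0
    · obtain ⟨j₀, hj₀⟩ := emap_zero_surj g hph q
      have hne : (⟨ph, j₀⟩ : Σ h, Fin (two 1 c₂ h)) ≠ ⟨l, i_s⟩ := by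
        intro he
        rcases Sigma.mk.inj_iff.mp he with ⟨hh, _⟩
        subst hh
        exact hpne (by
          show (⟨ph, q⟩ : Σ h, Fin (two 1 n h)) = ⟨ph, emap g ph i_s⟩
          exact congrArg _ (fin_two_sub hph q (emap g ph i_s)))
      have hmem := h3 ⟨ph, j₀⟩ hne
      rw [show (projCfg g c).st ph j₀ = c.st ph q from by
        show c.st ph (emap g ph j₀) = c.st ph q
        rw [hj₀]] at hmem
      exact hqnot hmem
    · have hph1 : ph = 1 := Fin.ext (by omega)
      subst hph1
      by_cases hl : l.val = 0
      · obtain ⟨i', hsame, _⟩ := HP2 q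
        have hne : (⟨1, i'⟩ : Σ h, Fin (two 1 c₂ h)) ≠ ⟨l, i_s⟩ := by
          intro he
          have h1' := (Sigma.mk.inj_iff.mp he).1
          rw [← h1'] at hl
          exact absurd hl (by decide)
        have hmem := h3 ⟨1, i'⟩ hne
        rw [show (projCfg g c).st 1 i' = c.st 1 (emap g 1 i') from rfl, hsame] at hmem
        exact hqnot hmem
      · have hl1 : l = 1 := Fin.ext (by omega)
        subst hl1
        have hq_ne : q ≠ emap g 1 i_s := fun he => hpne (by rw [he])
        obtain ⟨i', hsame, hcase⟩ := HP2 q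
        have blocker : ∀ ib : Fin (two 1 c₂ 1), ib ≠ i_s →
            c.st 1 (emap g 1 ib) = c.st 1 q → False := by
          intro ib hib hsb
          have hne : (⟨1, ib⟩ : Σ h, Fin (two 1 c₂ h)) ≠ ⟨1, i_s⟩ :=
            fun he => hib (sigma_snd_eq he)
          have hmem := h3 ⟨1, ib⟩ hne
          rw [show (projCfg g c).st 1 ib = c.st 1 (emap g 1 ib) from rfl, hsb] at hmem
          exact hqnot hmem
        rcases hcase with heq | ⟨i'', hne'', hsame''⟩
        · exact blocker i' (fun h => hq_ne (by rw [← heq, h])) hsame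
        · by_cases hii : i' = i_s
          · exact blocker i'' (by rw [← hii]; exact hne'') hsame''
          · exact blocker i' hii hsame

end Deadlock


section Assembly

variable {n c₂ : ℕ} {A : ConjPNTA 2}

open Classical in
lemma hp2_of_T (g : Fin c₂ → Fin n) (hg : Function.Injective g) (c : Config A (two 1 n))
    (T : Finset (Fin (two 1 n 1)))
    (hrange : ∀ q ∈ T, ∃ i : Fin c₂, g i = q)
    (hT2 : ∀ a : Fin (two 1 n 1),
      min 2 (Finset.univ.filter (fun b => c.st 1 b = c.st 1 a)).card ≤
      (T ∩ Finset.univ.filter (fun b => c.st 1 b = c.st 1 a)).card) :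
    ∀ q : Fin (two 1 n 1), ∃ i', c.st 1 (emap g 1 i') = c.st 1 q ∧
      (emap g 1 i' = q ∨ ∃ i'', i'' ≠ i' ∧ c.st 1 (emap g 1 i'') = c.st 1 q) := by
  intro q
  set fib := Finset.univ.filter (fun b => c.st 1 b = c.st 1 q) with hfib
  have hqfib : q ∈ fib := Finset.mem_filter.mpr ⟨Finset.mem_univ _, rfl⟩
  have hfc : 1 ≤ fib.card := Finset.card_pos.mpr ⟨q, hqfib⟩
  have hTq := hT2 q
  rw [← hfib] at hTq
  by_cases h2 : 2 ≤ fib.card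
  · have h2' : 2 ≤ (T ∩ fib).card := by
      rw [min_eq_left h2] at hTq
      exact hTq
    obtain ⟨a, ha, b, hb, hab⟩ := Finset.one_lt_card.mp (show 1 < (T ∩ fib).card by omega)
    obtain ⟨ia, hia⟩ := hrange a (Finset.mem_inter.mp ha).1
    obtain ⟨ib, hib⟩ := hrange b (Finset.mem_inter.mp hb).1
    refine ⟨ia, ?_, Or.inr ⟨ib, ?_, ?_⟩⟩
    · rw [show emap g 1 ia = a from hia]
      exact (Finset.mem_filter.mp (Finset.mem_inter.mp ha).2).2
    · intro he
      apply hab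
      rw [← hia, ← hib, he]
    · rw [show emap g 1 ib = b from hib]
      exact (Finset.mem_filter.mp (Finset.mem_inter.mp hb).2).2
  · have h1' : 1 ≤ (T ∩ fib).card := by
      have hmin : 1 ≤ min 2 fib.card := le_min (by norm_num) hfc
      exact le_trans hmin hTq
    obtain ⟨a, ha⟩ := Finset.card_pos.mp h1'
    obtain ⟨ia, hia⟩ := hrange a (Finset.mem_inter.mp ha).1
    have haq : a = q :=
      Finset.card_le_one.mp (by omega) _ (Finset.mem_inter.mp ha).2 _ hqfib
    refine ⟨ia, ?_, Or.inl ?_⟩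
    · rw [show emap g 1 ia = a from hia]
      exact (Finset.mem_filter.mp (Finset.mem_inter.mp ha).2).2
    · rw [show emap g 1 ia = a from hia, haq]

open Classical in
lemma deadlock_case (hsz : 2 * A.size 1 < c₂) (hcn : c₂ ≤ n)
    {x : TimedComp A (two 1 n) (initConfig A (two 1 n))} {ρ : SPath A (two 1 n)}
    (hind : Induces x ρ) (hdl : x.Deadlocked) :
    ∃ g : Fin c₂ → Fin n, Function.Injective g ∧
      g ⟨0, by omega⟩ = ⟨0, by omega⟩ ∧
      SPath.IsDeadlockedFrom (initConfig A (two 1 c₂)) (projSPath g ρ) := by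
  have hc : 0 < c₂ := by omega
  have hn : 0 < n := by omega
  obtain ⟨vD, cD, tD, hD, hDn, Hd⟩ := hdl
  have HdD : ∀ c' : Config A (two 1 n), ¬ (∃ d, 0 < d ∧ DelayStep d cD c') :=
    fun c' h => Hd c' (Or.inl h)
  obtain ⟨pstar, hpstar⟩ := exists_pstar HdD
  letI : Fintype (A.State 1) := A.stateFintype 1
  have main : ∀ pres : Finset (Fin (two 1 n 1)),
      (⟨0, hn⟩ : Fin (two 1 n 1)) ∈ pres → pres.card ≤ 2 →
      (∀ g : Fin c₂ → Fin n, Function.Injective g →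
        (∀ q ∈ pres, ∃ i : Fin c₂, g i = q) →
        ∃ li : Σ l : Fin 2, Fin (two 1 c₂ l), ∀ d : NNReal, 0 < d → ∃ d', d' ≤ d ∧
          ¬ (A.inv li.1 (cD.st li.1 (emap g li.1 li.2))).sat
            (fun xx => cD.cl li.1 (emap g li.1 li.2) xx + d')) →
      ∃ g : Fin c₂ → Fin n, Function.Injective g ∧
        g ⟨0, hc⟩ = ⟨0, hn⟩ ∧
        SPath.IsDeadlockedFrom (initConfig A (two 1 c₂)) (projSPath g ρ) := by
    intro pres hp0 hp2 hcov
    obtain ⟨T, hpT, hTcard, hT2⟩ := tcon (cD.st 1) pres hp2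
    have hTc : T.card ≤ c₂ := by
      refine le_trans hTcard ?_
      rw [show Fintype.card (A.State 1) = A.size 1 from rfl]
      omega
    obtain ⟨g, hg, hg0, hrange⟩ := exists_inj hcn hc hn T hTc (hpT hp0)
    have HP2 := hp2_of_T g hg cD T (fun q hq => hrange q hq) hT2
    have Hinv := hcov g hg (fun q hq => hrange q (hpT hq))
    refine ⟨g, hg, hg0,
      fcomp g hg x, fcomp_induces g hg x ρ hind (Or.inl ⟨vD + 1, hDn⟩), ?_⟩
    obtain ⟨w, t, hsome, hnone⟩ := fcomp_final (g := g) (hg := hg) hD hDn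
    exact ⟨w, projCfg g cD, t, hsome, hnone, small_deadlock g hg Hd Hinv HP2⟩
  rcases pstar with ⟨pl, pq⟩
  by_cases hpl : pl.val = 0
  · refine main {⟨0, hn⟩} (Finset.mem_singleton_self _) (by simp) ?_
    intro g hg _
    obtain ⟨j₀, hj₀⟩ := emap_zero_surj g hpl pq
    refine ⟨⟨pl, j₀⟩, ?_⟩
    intro d hd
    show ∃ d', d' ≤ d ∧ ¬ (A.inv pl (cD.st pl (emap g pl j₀))).sat
      (fun xx => cD.cl pl (emap g pl j₀) xx + d')
    rw [hj₀]
    exact hpstar d hd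
  · have hpl1 : pl = 1 := Fin.ext (by omega)
    subst hpl1
    refine main (insert pq {⟨0, hn⟩}) (Finset.mem_insert_of_mem (Finset.mem_singleton_self _))
      (le_trans (Finset.card_insert_le _ _) (by simp)) ?_
    intro g hg hr
    obtain ⟨i, hi⟩ := hr pq (Finset.mem_insert_self _ _)
    refine ⟨⟨1, i⟩, ?_⟩
    intro d hd
    show ∃ d', d' ≤ d ∧ ¬ (A.inv 1 (cD.st 1 (emap g 1 i))).sat
      (fun xx => cD.cl 1 (emap g 1 i) xx + d')
    rw [show emap g 1 i = pq from hi]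
    exact hpstar d hd

end Assembly

-- STATEMENT 5
theorem conjunctive_bounding_i (A : ConjPNTA 2) (Φ : IMTL (A.State 1))
    (Q : PathQ) (hQ : Q = PathQ.E ∨ Q = PathQ.Einf ∨ Q = PathQ.Efin)
    (n : ℕ) (hn : cutoffTracked A Q ≤ n) :
    SatQ A (two 1 n) (valFirst A (two 1 n) 1 (Nat.lt_of_lt_of_le (cutoffTracked_pos A Q) hn)) Q Φ →
      SatQ A (two 1 (cutoffTracked A Q))
        (valFirst A (two 1 (cutoffTracked A Q)) 1 (cutoffTracked_pos A Q)) Q Φ := by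
  intro H
  rcases hQ with rfl | rfl | rfl
  · -- Q = E
    obtain ⟨ρ, hw, hsat⟩ := H
    rcases hw with hinf | hdl
    · obtain ⟨x, hind, hxinf⟩ := hinf
      obtain ⟨g, hg, hg0, hK⟩ := exists_g_keep_infinite (c₂ := cutoffTracked A PathQ.E)
        (by have := A.size_pos 1; show 2 ≤ 2 * A.size 1 + 1; omega) hn x hxinf
      refine ⟨projSPath g ρ, Or.inl ⟨fcomp g hg x,
        fcomp_induces g hg x ρ hind (Or.inr hK), fcomp_infinite hK⟩, ?_⟩
      exact (sat_transfer g _ _ (by rw [emap_one]; exact hg0) Φ ρ).mpr hsat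
    · obtain ⟨x, hind, hxdl⟩ := hdl
      obtain ⟨g, hg, hg0, hded⟩ := deadlock_case (c₂ := cutoffTracked A PathQ.E)
        (Nat.lt_succ_self _) hn hind hxdl
      refine ⟨projSPath g ρ, Or.inr hded, ?_⟩
      exact (sat_transfer g _ _ (by rw [emap_one]; exact hg0) Φ ρ).mpr hsat
  · -- Q = Einf
    obtain ⟨ρ, ⟨x, hind, hxinf⟩, hsat⟩ := H
    obtain ⟨g, hg, hg0, hK⟩ := exists_g_keep_infinite (c₂ := cutoffTracked A PathQ.Einf)
      (le_refl _) hn x hxinf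
    exact ⟨projSPath g ρ, ⟨fcomp g hg x,
      fcomp_induces g hg x ρ hind (Or.inr hK), fcomp_infinite hK⟩,
      (sat_transfer g _ _ (by rw [emap_one]; exact hg0) Φ ρ).mpr hsat⟩
  · -- Q = Efin
    obtain ⟨ρ, ⟨x, hind, hxfin⟩, hsat⟩ := H
    have hn0 : 0 < n := Nat.lt_of_lt_of_le Nat.one_pos hn
    set g : Fin (cutoffTracked A PathQ.Efin) → Fin n := fun _ => ⟨0, hn0⟩ with hgdef
    have hg : Function.Injective g := by
      intro a b _
      have ha : a.val < 1 := a.isLt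
      have hb : b.val < 1 := b.isLt
      exact Fin.ext (by omega)
    exact ⟨projSPath g ρ, ⟨fcomp g hg x,
      fcomp_induces g hg x ρ hind (Or.inl hxfin), fcomp_finite hxfin⟩,
      (sat_transfer g _ _ (by rw [emap_one]; rfl) Φ ρ).mpr hsat⟩

end PNTA
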